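/- Let (X1,Y1) and (X2,Y2) be independent pairs of discrete random variables, where X1 and X2 take values in {0,1} and have the same marginal distribution P_X, and Y1, Y2 take values in finite sets. Let U1 = X1 ⊕ X2 (addition in F_2) and U2 = X2. Then for every α ≥ 0 with α ≠ 1, H_α(U1 | (Y1,Y2)) ≥ max{ H_α(X1|Y1), H_α(X2|Y2) }. -/

import Mathlib

/-- `rpow0 a α = a ^ α` (real power) with the convention `0 ^ 0 = 0`,
so that at `α = 0` sums of `rpow0` count support sizes. -/
noncomputable def rpow0 (a α : ℝ) : ℝ := if a = 0 then 0 else a ^ α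

/-- Conditional Rényi entropy of order `α` (base-2 logarithm) of a joint
distribution `p` on `X × Y`:
`H_α(X|Y) = (1/(1-α)) * log₂ ((Σ_{x,y} p(x,y)^α) / (Σ_y P_Y(y)^α))`. -/
noncomputable def condRenyi {X Y : Type*} [Fintype X] [Fintype Y]
    (α : ℝ) (p : X × Y → ℝ) : ℝ :=
  (1 - α)⁻¹ * Real.logb 2
    ((∑ z : X × Y, rpow0 (p z) α) / (∑ y : Y, rpow0 (∑ x : X, p (x, y)) α))

/-!
For fixed `(y1, y2)` the conditional law of `U1` is a mixture of translates of the law of `X1`,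
with weights the law of `X2` given `y2`. Since `t ↦ t ^ α` is concave on `[0, ∞)` for `α ≤ 1`
(convex for `α ≥ 1`; with the convention `0 ^ 0 = 0` this includes `α = 0`) and multiplicative,
Jensen's inequality gives `Σ_u P(u, y)^α ≥ P(y2)^α · Σ_x P(x, y1)^α` (reversed for `α > 1`).
Summing over `y`, the numerator of `H_α(U1|Y1Y2)` dominates (is dominated by) that of
`H_α(X1|Y1)` times `Σ P(y2)^α`, while the denominator factors exactly as the product of the two
denominators; the sign of `1 - α` turns both cases into the same entropy inequality. Exchanging
the roles of the two pairs gives the bound by `H_α(X2|Y2)`.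
-/

open Finset Set

section rpow0

variable {α : ℝ}

lemma rpow0_zero_left (α : ℝ) : rpow0 0 α = 0 := if_pos rfl

lemma rpow0_nonneg {a : ℝ} (ha : 0 ≤ a) : 0 ≤ rpow0 a α := by
  unfold rpow0
  split
  · exact le_rfl
  · exact Real.rpow_nonneg ha α

lemma rpow0_pos {a : ℝ} (ha : 0 < a) : 0 < rpow0 a α := by
  rw [rpow0, if_neg ha.ne']
  exact Real.rpow_pos_of_pos ha α

lemma rpow0_eq_rpow (hα : α ≠ 0) (a : ℝ) : rpow0 a α = a ^ α := by
  unfold rpow0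
  split
  · subst a; rw [Real.zero_rpow hα]
  · rfl

lemma rpow0_mul {a b : ℝ} (ha : 0 ≤ a) (hb : 0 ≤ b) :
    rpow0 (a * b) α = rpow0 a α * rpow0 b α := by
  rcases ha.eq_or_lt with rfl | ha
  · simp [rpow0_zero_left]
  rcases hb.eq_or_lt with rfl | hb
  · simp [rpow0_zero_left]
  rw [rpow0, rpow0, rpow0, if_neg (by positivity), if_neg ha.ne', if_neg hb.ne',
    Real.mul_rpow ha.le hb.le]

lemma concaveOn_rpow0_zero : ConcaveOn ℝ (Ici 0) (rpow0 · 0) := by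
  refine ⟨convex_Ici 0, fun x hx y hy a b ha hb hab => ?_⟩
  simp only [Set.mem_Ici] at hx hy
  simp only [smul_eq_mul, rpow0, Real.rpow_zero]
  by_cases hxy : a * x + b * y = 0
  · have hax : a * x = 0 := by nlinarith [mul_nonneg ha hx, mul_nonneg hb hy]
    have hby : b * y = 0 := by nlinarith [mul_nonneg ha hx, mul_nonneg hb hy]
    rcases mul_eq_zero.1 hax with h | h <;> rcases mul_eq_zero.1 hby with h' | h' <;> simp [h, h']
  · rw [if_neg hxy]
    split_ifs <;> linarith

lemma concaveOn_rpow0 (hα0 : 0 ≤ α) (hα1 : α ≤ 1) : ConcaveOn ℝ (Ici 0) (rpow0 · α) := by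
  rcases hα0.eq_or_lt with rfl | hα0
  · exact concaveOn_rpow0_zero
  exact (Real.concaveOn_rpow hα0.le hα1).congr fun a _ => (rpow0_eq_rpow hα0.ne' a).symm

lemma convexOn_rpow0 (hα : 1 ≤ α) : ConvexOn ℝ (Ici 0) (rpow0 · α) :=
  (convexOn_rpow hα).congr fun a _ => (rpow0_eq_rpow (by linarith) a).symm

lemma sum_rpow0_pos {ι : Type*} [Fintype ι] {x : ι → ℝ} (hx : ∀ i, 0 ≤ x i)
    (hs : 0 < ∑ i, x i) : 0 < ∑ i, rpow0 (x i) α := by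
  obtain ⟨i, -, hi⟩ := (sum_pos_iff_of_nonneg fun i _ => hx i).1 hs
  exact sum_pos' (fun j _ => rpow0_nonneg (hx j)) ⟨i, mem_univ i, rpow0_pos hi⟩

end rpow0

section Jensen

variable {ι : Type*} [Fintype ι] {α : ℝ} {w x : ι → ℝ}

lemma rpow0_sum_mul_centerMass (hw : ∀ i, 0 ≤ w i) (hW : 0 < ∑ i, w i) (hx : ∀ i, 0 ≤ x i) :
    rpow0 (∑ i, w i * x i) α = rpow0 (∑ i, w i) α * rpow0 (univ.centerMass w x) α := by
  rw [← rpow0_mul hW.le ((convex_Ici (0 : ℝ)).centerMass_mem (fun i _ => hw i) hW fun i _ => hx i),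
    Finset.centerMass, smul_eq_mul, ← mul_assoc, mul_inv_cancel₀ hW.ne', one_mul]
  simp only [smul_eq_mul]

lemma rpow0_sum_mul_sum_le_of_le_one (hα0 : 0 ≤ α) (hα1 : α ≤ 1) (hw : ∀ i, 0 ≤ w i)
    (hx : ∀ i, 0 ≤ x i) :
    rpow0 (∑ i, w i) α * ∑ i, w i * rpow0 (x i) α ≤ (∑ i, w i) * rpow0 (∑ i, w i * x i) α := by
  rcases (sum_nonneg fun i _ => hw i).eq_or_lt with hW | hW
  · rw [← hW, rpow0_zero_left]
    simp
  have hjensen := (concaveOn_rpow0 hα0 hα1).le_map_centerMass (t := univ) (fun i _ => hw i) hW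
    fun i _ => hx i
  simp only [Finset.centerMass, smul_eq_mul, Function.comp_apply] at hjensen
  rw [inv_mul_le_iff₀ hW] at hjensen
  rw [rpow0_sum_mul_centerMass hw hW hx, mul_left_comm, Finset.centerMass]
  exact mul_le_mul_of_nonneg_left (by simpa using hjensen) (rpow0_nonneg hW.le)

lemma sum_mul_rpow0_sum_le_of_one_le (hα : 1 ≤ α) (hw : ∀ i, 0 ≤ w i) (hx : ∀ i, 0 ≤ x i) :
    (∑ i, w i) * rpow0 (∑ i, w i * x i) α ≤ rpow0 (∑ i, w i) α * ∑ i, w i * rpow0 (x i) α := by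
  rcases (sum_nonneg fun i _ => hw i).eq_or_lt with hW | hW
  · rw [← hW, rpow0_zero_left]
    simp
  have hjensen := (convexOn_rpow0 hα).map_centerMass_le (t := univ) (fun i _ => hw i) hW
    fun i _ => hx i
  simp only [Finset.centerMass, smul_eq_mul, Function.comp_apply] at hjensen
  rw [le_inv_mul_iff₀ hW] at hjensen
  rw [rpow0_sum_mul_centerMass hw hW hx, mul_left_comm, Finset.centerMass]
  exact mul_le_mul_of_nonneg_left (by simpa using hjensen) (rpow0_nonneg hW.le)

end Jensen

section crossCorr

variable {G : Type*} [AddCommGroup G] [Fintype G] {α : ℝ} {a b : G → ℝ}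

def crossCorr (a b : G → ℝ) (u : G) : ℝ := ∑ v, a (u + v) * b v

lemma crossCorr_nonneg (ha : ∀ u, 0 ≤ a u) (hb : ∀ u, 0 ≤ b u) (u : G) : 0 ≤ crossCorr a b u :=
  sum_nonneg fun v _ => mul_nonneg (ha _) (hb v)

lemma sum_sum_mul_comp_add_right (b g : G → ℝ) :
    ∑ u, ∑ v, b v * g (u + v) = (∑ v, b v) * ∑ u, g u := by
  rw [sum_comm, sum_mul]
  exact sum_congr rfl fun v _ => by rw [← mul_sum, ← Equiv.sum_comp (Equiv.addRight v) g]; rfl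

lemma sum_crossCorr (a b : G → ℝ) : ∑ u, crossCorr a b u = (∑ u, a u) * ∑ u, b u := by
  simp only [crossCorr, mul_comm (a _)]
  rw [sum_sum_mul_comp_add_right, mul_comm]

lemma crossCorr_neg (a b : G → ℝ) (u : G) : crossCorr b a (-u) = crossCorr a b u := by
  simp only [crossCorr]
  rw [← Equiv.sum_comp (Equiv.addLeft u)]
  simp [mul_comm]

lemma sum_comp_crossCorr_comm (g : ℝ → ℝ) (a b : G → ℝ) :
    ∑ u, g (crossCorr a b u) = ∑ u, g (crossCorr b a u) := by
  rw [← Equiv.sum_comp (Equiv.neg G) (fun u => g (crossCorr b a u))]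
  simp [crossCorr_neg]

lemma rpow0_sum_mul_sum_le_sum_rpow0_crossCorr (hα0 : 0 ≤ α) (hα1 : α ≤ 1)
    (ha : ∀ u, 0 ≤ a u) (hb : ∀ u, 0 ≤ b u) :
    rpow0 (∑ v, b v) α * ∑ u, rpow0 (a u) α ≤ ∑ u, rpow0 (crossCorr a b u) α := by
  rcases (sum_nonneg fun v _ => hb v).eq_or_lt with hW | hW
  · rw [← hW, rpow0_zero_left, zero_mul]
    exact sum_nonneg fun u _ => rpow0_nonneg (crossCorr_nonneg ha hb u)
  refine le_of_mul_le_mul_left ?_ hW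
  calc (∑ v, b v) * (rpow0 (∑ v, b v) α * ∑ u, rpow0 (a u) α)
      = ∑ u, rpow0 (∑ v, b v) α * ∑ v, b v * rpow0 (a (u + v)) α := by
        rw [← mul_sum, sum_sum_mul_comp_add_right (g := fun u => rpow0 (a u) α)]
        ring
    _ ≤ ∑ u, (∑ v, b v) * rpow0 (∑ v, b v * a (u + v)) α :=
        sum_le_sum fun u _ => rpow0_sum_mul_sum_le_of_le_one hα0 hα1 hb fun v => ha _
    _ = (∑ v, b v) * ∑ u, rpow0 (crossCorr a b u) α := by
        simp only [mul_sum, crossCorr, mul_comm (b _)]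

lemma sum_rpow0_crossCorr_le_rpow0_sum_mul_sum (hα : 1 ≤ α) (ha : ∀ u, 0 ≤ a u)
    (hb : ∀ u, 0 ≤ b u) :
    ∑ u, rpow0 (crossCorr a b u) α ≤ rpow0 (∑ v, b v) α * ∑ u, rpow0 (a u) α := by
  rcases (sum_nonneg fun v _ => hb v).eq_or_lt with hW | hW
  · have hb0 : ∀ v, b v = 0 := fun v => (sum_eq_zero_iff_of_nonneg fun v _ => hb v).1 hW.symm v
      (mem_univ v)
    simp [crossCorr, hb0, rpow0_zero_left]
  refine le_of_mul_le_mul_left ?_ hW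
  calc (∑ v, b v) * ∑ u, rpow0 (crossCorr a b u) α
      = ∑ u, (∑ v, b v) * rpow0 (∑ v, b v * a (u + v)) α := by
        simp only [mul_sum, crossCorr, mul_comm (b _)]
    _ ≤ ∑ u, rpow0 (∑ v, b v) α * ∑ v, b v * rpow0 (a (u + v)) α :=
        sum_le_sum fun u _ => sum_mul_rpow0_sum_le_of_one_le hα hb fun v => ha _
    _ = (∑ v, b v) * (rpow0 (∑ v, b v) α * ∑ u, rpow0 (a u) α) := by
        rw [← mul_sum, sum_sum_mul_comp_add_right (g := fun u => rpow0 (a u) α)]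
        ring

end crossCorr

section condRenyi

variable {X Y X' Y' : Type*} [Fintype X] [Fintype Y] [Fintype X'] [Fintype Y'] {α : ℝ}
  {p : X × Y → ℝ} {q : X' × Y' → ℝ}

noncomputable def condRenyiNum (α : ℝ) (p : X × Y → ℝ) : ℝ := ∑ z, rpow0 (p z) α

noncomputable def condRenyiDen (α : ℝ) (p : X × Y → ℝ) : ℝ := ∑ y, rpow0 (∑ x, p (x, y)) α

lemma condRenyi_eq (α : ℝ) (p : X × Y → ℝ) :
    condRenyi α p = (1 - α)⁻¹ * Real.logb 2 (condRenyiNum α p / condRenyiDen α p) := rfl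

lemma condRenyiNum_eq_sum_sum (α : ℝ) (p : X × Y → ℝ) :
    condRenyiNum α p = ∑ y, ∑ x, rpow0 (p (x, y)) α :=
  Fintype.sum_prod_type_right _

lemma condRenyiNum_pos (hp : ∀ z, 0 ≤ p z) (hs : 0 < ∑ z, p z) : 0 < condRenyiNum α p :=
  sum_rpow0_pos hp hs

lemma condRenyiDen_pos (hp : ∀ z, 0 ≤ p z) (hs : 0 < ∑ z, p z) : 0 < condRenyiDen α p :=
  sum_rpow0_pos (fun y => sum_nonneg fun x _ => hp (x, y)) (by rwa [← Fintype.sum_prod_type_right])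

lemma condRenyi_le_condRenyi_of_lt_one {c : ℝ} (hα : α < 1) (hp : ∀ z, 0 ≤ p z)
    (hs : 0 < ∑ z, p z) (hc : 0 < c) (hnum : condRenyiNum α p * c ≤ condRenyiNum α q)
    (hden : condRenyiDen α q = condRenyiDen α p * c) :
    condRenyi α p ≤ condRenyi α q := by
  have hD := condRenyiDen_pos (α := α) hp hs
  rw [condRenyi_eq, condRenyi_eq, hden]
  refine mul_le_mul_of_nonneg_left ?_ (inv_nonneg.2 (sub_nonneg.2 hα.le))
  refine Real.logb_le_logb_of_le one_lt_two (div_pos (condRenyiNum_pos hp hs) hD) ?_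
  rw [← mul_div_mul_right _ _ hc.ne']
  exact div_le_div_of_nonneg_right hnum (by positivity)

lemma condRenyi_le_condRenyi_of_one_lt {c : ℝ} (hα : 1 < α) (hp : ∀ z, 0 ≤ p z)
    (hs : 0 < ∑ z, p z) (hq : ∀ z, 0 ≤ q z) (hsq : 0 < ∑ z, q z) (hc : 0 < c)
    (hnum : condRenyiNum α q ≤ condRenyiNum α p * c)
    (hden : condRenyiDen α q = condRenyiDen α p * c) :
    condRenyi α p ≤ condRenyi α q := by
  have hD := condRenyiDen_pos (α := α) hp hs
  rw [condRenyi_eq, condRenyi_eq, hden]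
  refine mul_le_mul_of_nonpos_left ?_ (inv_nonpos.2 (sub_nonpos.2 hα.le))
  refine Real.logb_le_logb_of_le one_lt_two (div_pos (condRenyiNum_pos hq hsq) (by positivity)) ?_
  rw [← mul_div_mul_right (condRenyiNum α p) _ hc.ne']
  exact div_le_div_of_nonneg_right hnum (by positivity)

end condRenyi

section polarPlus

variable {G Y1 Y2 : Type*} [AddCommGroup G] [Fintype G] {α : ℝ} {p1 : G × Y1 → ℝ} {p2 : G × Y2 → ℝ}

/-- The law of `(X1 - X2, (Y1, Y2))` for independent pairs; over `ZMod 2` this is `X1 + X2`. -/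
def polarPlus (p1 : G × Y1 → ℝ) (p2 : G × Y2 → ℝ) (z : G × (Y1 × Y2)) : ℝ :=
  crossCorr (fun x => p1 (x, z.2.1)) (fun x => p2 (x, z.2.2)) z.1

lemma polarPlus_nonneg (h1 : ∀ z, 0 ≤ p1 z) (h2 : ∀ z, 0 ≤ p2 z) (z : G × (Y1 × Y2)) :
    0 ≤ polarPlus p1 p2 z :=
  crossCorr_nonneg (fun _ => h1 _) (fun _ => h2 _) z.1

variable [Fintype Y1] [Fintype Y2]

lemma sum_polarPlus (p1 : G × Y1 → ℝ) (p2 : G × Y2 → ℝ) :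
    ∑ z, polarPlus p1 p2 z = (∑ z, p1 z) * ∑ z, p2 z := by
  rw [Fintype.sum_prod_type_right, Fintype.sum_prod_type, Fintype.sum_prod_type_right p1,
    Fintype.sum_prod_type_right p2, Fintype.sum_mul_sum]
  exact sum_congr rfl fun y1 _ => sum_congr rfl fun y2 _ =>
    sum_crossCorr (fun x => p1 (x, y1)) (fun x => p2 (x, y2))

lemma condRenyiNum_polarPlus (α : ℝ) (p1 : G × Y1 → ℝ) (p2 : G × Y2 → ℝ) :
    condRenyiNum α (polarPlus p1 p2)
      = ∑ y1, ∑ y2, ∑ u, rpow0 (crossCorr (fun x => p1 (x, y1)) (fun x => p2 (x, y2)) u) α := by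
  rw [condRenyiNum_eq_sum_sum, Fintype.sum_prod_type]
  rfl

lemma condRenyiNum_polarPlus_comm (α : ℝ) (p1 : G × Y1 → ℝ) (p2 : G × Y2 → ℝ) :
    condRenyiNum α (polarPlus p1 p2) = condRenyiNum α (polarPlus p2 p1) := by
  rw [condRenyiNum_polarPlus, condRenyiNum_polarPlus, sum_comm]
  simp only [sum_comp_crossCorr_comm (rpow0 · α) (fun x => p1 (x, _))]

lemma condRenyiDen_polarPlus (h1 : ∀ z, 0 ≤ p1 z) (h2 : ∀ z, 0 ≤ p2 z) :
    condRenyiDen α (polarPlus p1 p2) = condRenyiDen α p1 * condRenyiDen α p2 := by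
  rw [condRenyiDen, condRenyiDen, condRenyiDen, Fintype.sum_mul_sum, Fintype.sum_prod_type]
  refine sum_congr rfl fun y1 _ => sum_congr rfl fun y2 _ => ?_
  rw [← rpow0_mul (sum_nonneg fun x _ => h1 _) (sum_nonneg fun x _ => h2 _)]
  exact congrArg (rpow0 · α) (sum_crossCorr (fun x => p1 (x, y1)) (fun x => p2 (x, y2)))

lemma condRenyiNum_mul_condRenyiDen_le_polarPlus (hα0 : 0 ≤ α) (hα1 : α ≤ 1)
    (h1 : ∀ z, 0 ≤ p1 z) (h2 : ∀ z, 0 ≤ p2 z) :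
    condRenyiNum α p1 * condRenyiDen α p2 ≤ condRenyiNum α (polarPlus p1 p2) := by
  rw [condRenyiNum_polarPlus, condRenyiNum_eq_sum_sum, condRenyiDen, Fintype.sum_mul_sum]
  gcongr with y1 _ y2 _
  rw [mul_comm]
  exact rpow0_sum_mul_sum_le_sum_rpow0_crossCorr hα0 hα1 (fun _ => h1 _) fun _ => h2 _

lemma condRenyiNum_polarPlus_le_mul_condRenyiDen (hα : 1 ≤ α)
    (h1 : ∀ z, 0 ≤ p1 z) (h2 : ∀ z, 0 ≤ p2 z) :
    condRenyiNum α (polarPlus p1 p2) ≤ condRenyiNum α p1 * condRenyiDen α p2 := by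
  rw [condRenyiNum_polarPlus, condRenyiNum_eq_sum_sum, condRenyiDen, Fintype.sum_mul_sum]
  gcongr with y1 _ y2 _
  rw [mul_comm]
  exact sum_rpow0_crossCorr_le_rpow0_sum_mul_sum hα (fun _ => h1 _) fun _ => h2 _

end polarPlus

theorem renyi_polar_plus_general
    {Y1 Y2 : Type*} [Fintype Y1] [Fintype Y2]
    (p1 : ZMod 2 × Y1 → ℝ) (p2 : ZMod 2 × Y2 → ℝ)
    (h1 : ∀ z, 0 ≤ p1 z) (h2 : ∀ z, 0 ≤ p2 z)
    (hs1 : ∑ z, p1 z = 1) (hs2 : ∑ z, p2 z = 1)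
    (α : ℝ) (hα0 : 0 ≤ α) (hα1 : α ≠ 1) :
    max (condRenyi α p1) (condRenyi α p2)
      ≤ condRenyi α (fun z : ZMod 2 × (Y1 × Y2) =>
          ∑ u2 : ZMod 2, p1 (z.1 + u2, z.2.1) * p2 (u2, z.2.2)) := by
  change _ ≤ condRenyi α (polarPlus p1 p2)
  have hs1' : 0 < ∑ z, p1 z := hs1 ▸ one_pos
  have hs2' : 0 < ∑ z, p2 z := hs2 ▸ one_pos
  have hq := polarPlus_nonneg h1 h2
  have hsq : 0 < ∑ z, polarPlus p1 p2 z := by rw [sum_polarPlus]; positivity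
  have hD1 := condRenyiDen_pos (α := α) h1 hs1'
  have hD2 := condRenyiDen_pos (α := α) h2 hs2'
  have hden := condRenyiDen_polarPlus (α := α) h1 h2
  have hden' := hden.trans (mul_comm _ _)
  rcases hα1.lt_or_gt with hlt | hgt
  · exact max_le
      (condRenyi_le_condRenyi_of_lt_one hlt h1 hs1' hD2
        (condRenyiNum_mul_condRenyiDen_le_polarPlus hα0 hlt.le h1 h2) hden)
      (condRenyi_le_condRenyi_of_lt_one hlt h2 hs2' hD1
        (condRenyiNum_polarPlus_comm α p1 p2 ▸
          condRenyiNum_mul_condRenyiDen_le_polarPlus hα0 hlt.le h2 h1) hden')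
  · exact max_le
      (condRenyi_le_condRenyi_of_one_lt hgt h1 hs1' hq hsq hD2
        (condRenyiNum_polarPlus_le_mul_condRenyiDen hgt.le h1 h2) hden)
      (condRenyi_le_condRenyi_of_one_lt hgt h2 hs2' hq hsq hD1
        (condRenyiNum_polarPlus_comm α p1 p2 ▸
          condRenyiNum_polarPlus_le_mul_condRenyiDen hgt.le h2 h1) hden')

/-- for the basic polar transform `U1 = X1 ⊕ X2`, `U2 = X2` applied to
independent pairs `(X1,Y1)`, `(X2,Y2)` with the same input marginal `P_X`,
`H_α(U1 | (Y1,Y2)) ≥ max (H_α(X1|Y1)) (H_α(X2|Y2))` for all `α ≥ 0`, `α ≠ 1`.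
The joint distribution of `(U1,(Y1,Y2))` is
`(u1,(y1,y2)) ↦ Σ_{u2} p1(u1+u2, y1) * p2(u2, y2)`. -/
theorem renyi_polar_plus
    {Y1 Y2 : Type*} [Fintype Y1] [Fintype Y2]
    (p1 : ZMod 2 × Y1 → ℝ) (p2 : ZMod 2 × Y2 → ℝ)
    (h1 : ∀ z, 0 ≤ p1 z) (h2 : ∀ z, 0 ≤ p2 z)
    (hs1 : ∑ z, p1 z = 1) (hs2 : ∑ z, p2 z = 1)
    (hmarg : ∀ x : ZMod 2, ∑ y1, p1 (x, y1) = ∑ y2, p2 (x, y2))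
    (α : ℝ) (hα0 : 0 ≤ α) (hα1 : α ≠ 1) :
    max (condRenyi α p1) (condRenyi α p2)
      ≤ condRenyi α (fun z : ZMod 2 × (Y1 × Y2) =>
          ∑ u2 : ZMod 2, p1 (z.1 + u2, z.2.1) * p2 (u2, z.2.2)) :=
  renyi_polar_plus_general p1 p2 h1 h2 hs1 hs2 α hα0 hα1
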